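/- arXiv:2406.11693 — 3 statements merged into one kernel-verified Lean document; each statement's English description precedes it below -/
import Mathlib

section
/- Let α ≥ 0 and let Λ₁ be the ground-state eigenvalue of −g'' = Λ g on [0,1] with Robin conditions ±g' + α g = 0 at z = 0, 1. Then Λ₁ ≥ ((−α + √(α² + 8π²α)) / (4π))². -/
/-!
If `Λ ≤ 0`, multiplying the equation by `g` shows that `g g'` is nondecreasing on `[0, 1]`, while
the boundary conditions give `g(0) g'(0) ≥ 0 ≥ g(1) g'(1)`; so `g g' = 0`, `g` is a nonzero
constant, and `Λ = α = 0`. If `Λ = ν ^ 2 > 0`, two Wronskians against `cos (ν z)` and `sin (ν z)`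
show that `g` is a combination of these, and the boundary conditions force
`(α² - ν²) sin ν + 2 α ν cos ν = 2 (α cos (ν/2) - ν sin (ν/2)) (α sin (ν/2) + ν cos (ν/2)) = 0`.
By Jordan's inequalities the first factor is positive as soon as `π ν² < 2 α (π - ν)`, which
holds whenever `ν` is below the positive root `(-α + √(α² + 8π²α)) / (4π)` of
`2 π ν² + α ν - α π`.
-/

open Real Set

/-- `Λ` is an eigenvalue of the Robin problem `-g'' = Λ g` on `[0,1]` with
boundary conditions `-g'(0) + α g(0) = 0` and `g'(1) + α g(1) = 0`. -/
def IsRobinEigenvalue (α Λ : ℝ) : Prop :=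
  ∃ g : ℝ → ℝ, ContDiff ℝ 2 g ∧ (∃ z ∈ Set.Icc (0:ℝ) 1, g z ≠ 0) ∧
    (∀ z ∈ Set.Icc (0:ℝ) 1, deriv (deriv g) z = -Λ * g z) ∧
    -(deriv g 0) + α * g 0 = 0 ∧ deriv g 1 + α * g 1 = 0

theorem wronskian_eq_of_hasDerivAt {a b c : ℝ} {u u' v v' : ℝ → ℝ}
    (hu : ∀ x ∈ Icc a b, HasDerivAt u (u' x) x) (hv : ∀ x ∈ Icc a b, HasDerivAt v (v' x) x)
    (hu' : ∀ x ∈ Icc a b, HasDerivAt u' (c * u x) x)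
    (hv' : ∀ x ∈ Icc a b, HasDerivAt v' (c * v x) x) :
    ∀ x ∈ Icc a b, u' x * v x - u x * v' x = u' a * v a - u a * v' a := by
  apply constant_of_has_deriv_right_zero
  · intro x hx
    exact (((hu' x hx).continuousAt.mul (hv x hx).continuousAt).sub
      ((hu x hx).continuousAt.mul (hv' x hx).continuousAt)).continuousWithinAt
  · intro x hx
    have hx := Ico_subset_Icc_self hx
    exact ((((hu' x hx).mul (hv x hx)).sub ((hu x hx).mul (hv' x hx))).congr_deriv
      (by ring)).hasDerivWithinAt

theorem eq_cos_sin_of_deriv_deriv_eq {b ν : ℝ} {g : ℝ → ℝ} (hg : ContDiff ℝ 2 g)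
    (hode : ∀ z ∈ Icc 0 b, deriv (deriv g) z = -ν ^ 2 * g z) {x : ℝ} (hx : x ∈ Icc 0 b) :
    ν * g x = ν * g 0 * cos (ν * x) + deriv g 0 * sin (ν * x) ∧
      deriv g x = deriv g 0 * cos (ν * x) - ν * g 0 * sin (ν * x) := by
  have hg' : ∀ z ∈ Icc 0 b, HasDerivAt g (deriv g z) z :=
    fun z _ ↦ (hg.differentiable two_ne_zero z).hasDerivAt
  have hg'' : ∀ z ∈ Icc 0 b, HasDerivAt (deriv g) (-ν ^ 2 * g z) z :=
    fun z hz ↦ hode z hz ▸ (hg.differentiable_deriv_two z).hasDerivAt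
  have hlin : ∀ z, HasDerivAt (fun y ↦ ν * y) ν z := fun z ↦ by
    simpa using (hasDerivAt_id z).const_mul ν
  have hcos : ∀ z ∈ Icc 0 b, HasDerivAt (fun y ↦ cos (ν * y)) (-ν * sin (ν * z)) z :=
    fun z _ ↦ (hlin z).cos.congr_deriv (by ring)
  have hsin : ∀ z ∈ Icc 0 b, HasDerivAt (fun y ↦ sin (ν * y)) (ν * cos (ν * z)) z :=
    fun z _ ↦ (hlin z).sin.congr_deriv (by ring)
  have hcos' : ∀ z ∈ Icc 0 b,
      HasDerivAt (fun y ↦ -ν * sin (ν * y)) (-ν ^ 2 * cos (ν * z)) z :=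
    fun z hz ↦ ((hsin z hz).const_mul (-ν)).congr_deriv (by ring)
  have hsin' : ∀ z ∈ Icc 0 b,
      HasDerivAt (fun y ↦ ν * cos (ν * y)) (-ν ^ 2 * sin (ν * z)) z :=
    fun z hz ↦ ((hcos z hz).const_mul ν).congr_deriv (by ring)
  have hWc := wronskian_eq_of_hasDerivAt hg' hcos hg'' hcos' x hx
  have hWs := wronskian_eq_of_hasDerivAt hg' hsin hg'' hsin' x hx
  simp only [mul_zero, cos_zero, sin_zero] at hWc hWs
  constructor
  · linear_combination
      sin (ν * x) * hWc - cos (ν * x) * hWs - ν * g x * sin_sq_add_cos_sq (ν * x)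
  · linear_combination
      cos (ν * x) * hWc + sin (ν * x) * hWs - deriv g x * sin_sq_add_cos_sq (ν * x)

theorem robin_eigenfunction_mul_deriv_eq_zero_of_nonpos {α Λ : ℝ} {g : ℝ → ℝ} (hα : 0 ≤ α)
    (hΛ : Λ ≤ 0) (hg : ContDiff ℝ 2 g) (hode : ∀ z ∈ Icc (0:ℝ) 1, deriv (deriv g) z = -Λ * g z)
    (hbc0 : -(deriv g 0) + α * g 0 = 0) (hbc1 : deriv g 1 + α * g 1 = 0) :
    ∀ z ∈ Icc (0:ℝ) 1, g z * deriv g z = 0 := by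
  have hq : ∀ z ∈ Icc (0:ℝ) 1,
      HasDerivAt (fun y ↦ g y * deriv g y) (deriv g z ^ 2 - Λ * g z ^ 2) z := fun z hz ↦
    ((hg.differentiable two_ne_zero z).hasDerivAt.mul
      (hg.differentiable_deriv_two z).hasDerivAt).congr_deriv (by rw [hode z hz]; ring)
  have hmono : MonotoneOn (fun y ↦ g y * deriv g y) (Icc 0 1) := by
    refine monotoneOn_of_hasDerivWithinAt_nonneg (convex_Icc 0 1)
      (fun z hz ↦ (hq z hz).continuousAt.continuousWithinAt)
      (fun z hz ↦ (hq z (interior_subset hz)).hasDerivWithinAt) fun z _ ↦ ?_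
    nlinarith [sq_nonneg (deriv g z), sq_nonneg (g z)]
  have hq0 : 0 ≤ g 0 * deriv g 0 := by
    rw [show deriv g 0 = α * g 0 by linarith]
    linarith [mul_nonneg hα (mul_self_nonneg (g 0))]
  have hq1 : g 1 * deriv g 1 ≤ 0 := by
    rw [show deriv g 1 = -(α * g 1) by linarith]
    linarith [mul_nonneg hα (mul_self_nonneg (g 1))]
  intro z hz
  have h0z : g 0 * deriv g 0 ≤ g z * deriv g z := hmono ⟨le_rfl, zero_le_one⟩ hz hz.1
  have hz1 : g z * deriv g z ≤ g 1 * deriv g 1 := hmono hz ⟨zero_le_one, le_rfl⟩ hz.2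
  linarith

theorem IsRobinEigenvalue.eq_zero_of_nonpos {α Λ : ℝ} (hα : 0 ≤ α) (hΛ : Λ ≤ 0)
    (h : IsRobinEigenvalue α Λ) : Λ = 0 ∧ α = 0 := by
  obtain ⟨g, hg, ⟨z₀, hz₀, hgz₀⟩, hode, hbc0, hbc1⟩ := h
  have hq := robin_eigenfunction_mul_deriv_eq_zero_of_nonpos hα hΛ hg hode hbc0 hbc1
  have hsq : ∀ z ∈ Icc (0:ℝ) 1, g z ^ 2 = g 0 ^ 2 := by
    refine constant_of_has_deriv_right_zero
      (hg.continuous.pow 2).continuousOn fun z hz ↦ ?_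
    have hz := Ico_subset_Icc_self hz
    exact (((hg.differentiable two_ne_zero z).hasDerivAt.pow 2).congr_deriv
      (by rw [mul_assoc, pow_one, hq z hz, mul_zero])).hasDerivWithinAt
  have hg_ne : ∀ z ∈ Icc (0:ℝ) 1, g z ≠ 0 := by
    intro z hz hgz
    have := (hsq z₀ hz₀).trans (hsq z hz).symm
    simp [hgz, hgz₀] at this
  have hg' : ∀ z ∈ Icc (0:ℝ) 1, deriv g z = 0 := fun z hz ↦
    (mul_eq_zero.mp (hq z hz)).resolve_left (hg_ne z hz)
  have hmid : (1 / 2 : ℝ) ∈ Icc (0:ℝ) 1 := ⟨by norm_num, by norm_num⟩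
  have hg'' : deriv (deriv g) (1 / 2) = 0 := by
    have : deriv g =ᶠ[nhds (1 / 2)] fun _ ↦ 0 :=
      Filter.eventually_of_mem (Icc_mem_nhds (by norm_num) (by norm_num)) hg'
    rw [this.deriv_eq, deriv_const]
  constructor
  · have : Λ * g (1 / 2) = 0 := by linarith [hode _ hmid]
    exact (mul_eq_zero.mp this).resolve_right (hg_ne _ hmid)
  · have : α * g 0 = 0 := by simpa [hg' 0 ⟨le_rfl, zero_le_one⟩] using hbc0
    exact (mul_eq_zero.mp this).resolve_right (hg_ne 0 ⟨le_rfl, zero_le_one⟩)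

/-- If `g'' = -ν ^ 2 g` and `g'(0) = α g(0)`, then `ν (g'(1) + α g(1)) = g(0) * robinChar α ν`. -/
noncomputable def robinChar (α ν : ℝ) : ℝ := (α ^ 2 - ν ^ 2) * sin ν + 2 * α * ν * cos ν

theorem IsRobinEigenvalue.robinChar_eq_zero {α ν : ℝ} (hν : ν ≠ 0)
    (h : IsRobinEigenvalue α (ν ^ 2)) : robinChar α ν = 0 := by
  obtain ⟨g, hg, ⟨z₀, hz₀, hgz₀⟩, hode, hbc0, hbc1⟩ := h
  have hsol := fun x (hx : x ∈ Icc (0:ℝ) 1) ↦ eq_cos_sin_of_deriv_deriv_eq hg hode hx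
  obtain ⟨hg1, hg'1⟩ := hsol 1 ⟨zero_le_one, le_rfl⟩
  have hg'0 : deriv g 0 = α * g 0 := by linarith
  rw [mul_one, hg'0] at hg1 hg'1
  have hchar : g 0 * robinChar α ν = 0 := by
    unfold robinChar
    linear_combination ν * hbc1 - ν * hg'1 - α * hg1
  by_contra hF
  have hg0 : g 0 = 0 := (mul_eq_zero.mp hchar).resolve_right hF
  have := (hsol z₀ hz₀).1
  rw [hg'0, hg0] at this
  exact hgz₀ ((mul_eq_zero.mp (by simpa using this)).resolve_left hν)

theorem robinChar_eq_mul (α ν : ℝ) :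
    robinChar α ν =
      2 * (α * cos (ν / 2) - ν * sin (ν / 2)) * (α * sin (ν / 2) + ν * cos (ν / 2)) := by
  have hsin := sin_two_mul (ν / 2)
  have hcos := cos_two_mul (ν / 2)
  rw [mul_div_cancel₀ ν two_ne_zero] at hsin hcos
  rw [robinChar, hsin, hcos]
  linear_combination 2 * α * ν * sin_sq_add_cos_sq (ν / 2)

theorem robinChar_pos {α ν : ℝ} (hα : 0 ≤ α) (hν : 0 < ν) (h : π * ν ^ 2 < 2 * α * (π - ν)) :
    0 < robinChar α ν := by
  have hνπ : ν < π := by nlinarith [pi_pos]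
  have hsin : 0 < sin (ν / 2) := sin_pos_of_pos_of_lt_pi (by linarith) (by linarith)
  have hcos : 0 < cos (ν / 2) := cos_pos_of_mem_Ioo ⟨by linarith, by linarith⟩
  have hfirst : ν * sin (ν / 2) < α * cos (ν / 2) := calc
    ν * sin (ν / 2) ≤ ν * (ν / 2) := mul_le_mul_of_nonneg_left (sin_le (by linarith)) hν.le
    _ < α * (1 - 2 / π * (ν / 2)) := by
      have : α * (1 - 2 / π * (ν / 2)) - ν * (ν / 2) =
          (2 * α * (π - ν) - π * ν ^ 2) / (2 * π) := by
        field_simp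
      have := div_pos (sub_pos.mpr h) (by positivity : (0:ℝ) < 2 * π)
      linarith
    _ ≤ α * cos (ν / 2) :=
      mul_le_mul_of_nonneg_left (one_sub_mul_le_cos (by linarith) (by linarith)) hα
  rw [robinChar_eq_mul]
  have : 0 < α * sin (ν / 2) + ν * cos (ν / 2) := by positivity
  have := sub_pos.mpr hfirst
  positivity

theorem two_mul_pi_mul_sq_lt_of_lt {α ν : ℝ} (hα : 0 ≤ α) (hν : 0 ≤ ν)
    (h : ν < (-α + √(α ^ 2 + 8 * π ^ 2 * α)) / (4 * π)) : 2 * π * ν ^ 2 < α * (π - ν) := by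
  rw [lt_div_iff₀ (by positivity), lt_neg_add_iff_add_lt, lt_sqrt (by positivity)] at h
  nlinarith [pi_pos]

theorem ground_state_lower_bound
    (α Λ₁ : ℝ) (hα : 0 ≤ α)
    (hΛ₁ : IsLeast {Λ : ℝ | IsRobinEigenvalue α Λ} Λ₁) :
    Λ₁ ≥ ((-α + Real.sqrt (α^2 + 8 * π^2 * α)) / (4 * π))^2 := by
  have hΛ : IsRobinEigenvalue α Λ₁ := hΛ₁.1
  have hβ : 0 ≤ (-α + √(α ^ 2 + 8 * π ^ 2 * α)) / (4 * π) := by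
    have : α ≤ √(α ^ 2 + 8 * π ^ 2 * α) := le_sqrt_of_sq_le (by nlinarith [pi_pos])
    exact div_nonneg (by linarith) (by positivity)
  by_contra! hlt
  rcases le_or_gt Λ₁ 0 with hle | hpos
  · obtain ⟨rfl, rfl⟩ := hΛ.eq_zero_of_nonpos hα hle
    simp at hlt
  · have hν : 0 < √Λ₁ := sqrt_pos.mpr hpos
    have hνβ := (pow_lt_pow_iff_left₀ hν.le hβ two_ne_zero).mp (by rwa [sq_sqrt hpos.le])
    have hquad := two_mul_pi_mul_sq_lt_of_lt hα hν.le hνβ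
    refine (robinChar_pos hα hν ?_).ne' (IsRobinEigenvalue.robinChar_eq_zero hν.ne' ?_)
    · linarith [mul_nonneg pi_pos.le (sq_nonneg √Λ₁)]
    · rwa [sq_sqrt hpos.le]
end

section
/- Let μ₁ ∈ (0, π) be the unique solution of μ tan(μ/2) = α for α > 0. Then μ₁² ≥ ((−α + √(α² + 8π²α))/(4π))². -/
/-!
Writing `α = μ₁ tan (μ₁/2)` gives `α cos (μ₁/2) = μ₁ sin (μ₁/2) ≤ μ₁²/2`, while Jordan's inequality
gives `cos (μ₁/2) ≥ 1 - μ₁/π`. Hence `α (π - μ₁) ≤ π μ₁²/2 ≤ 2π μ₁²`, so `μ₁` lies to the right of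
the positive root of `2π x² + α x - π α`, which is the stated bound.
-/

open Real

theorem mul_tan_half_mul_pi_sub_le {μ : ℝ} (h₀ : 0 ≤ μ) (hπ : μ < π) :
    μ * tan (μ / 2) * (π - μ) ≤ π * μ ^ 2 / 2 := by
  have hcos : 0 < cos (μ / 2) := cos_pos_of_mem_Ioo ⟨by linarith [pi_pos], by linarith⟩
  have htan : 0 ≤ tan (μ / 2) := tan_nonneg_of_nonneg_of_le_pi_div_two (by linarith) (by linarith)
  have hjordan : 1 - μ / π ≤ cos (μ / 2) := by
    have h := one_sub_mul_le_cos (x := μ / 2) (by linarith) (by linarith)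
    rwa [show 2 / π * (μ / 2) = μ / π by ring] at h
  have hsin : μ * tan (μ / 2) * cos (μ / 2) = μ * sin (μ / 2) := by
    rw [tan_eq_sin_div_cos]
    field_simp
  calc μ * tan (μ / 2) * (π - μ) = π * (μ * tan (μ / 2) * (1 - μ / π)) := by
        field_simp
    _ ≤ π * (μ * sin (μ / 2)) := by
        rw [← hsin]
        gcongr
    _ ≤ π * (μ * (μ / 2)) := by
        gcongr
        exact sin_le (by linarith)
    _ = π * μ ^ 2 / 2 := by ring

theorem quadratic_root_le {a b c x : ℝ} (ha : 0 < a) (hb : 0 ≤ b) (hx : 0 ≤ x)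
    (h : c ≤ a * x ^ 2 + b * x) : (-b + √(b ^ 2 + 4 * a * c)) / (2 * a) ≤ x := by
  have hsqrt : √(b ^ 2 + 4 * a * c) ≤ 2 * a * x + b :=
    (sqrt_le_left (by positivity)).2 (by nlinarith)
  rw [div_le_iff₀ (by positivity)]
  linarith

theorem quadratic_root_nonneg {a b c : ℝ} (ha : 0 < a) (hb : 0 ≤ b) (hc : 0 ≤ c) :
    0 ≤ (-b + √(b ^ 2 + 4 * a * c)) / (2 * a) := by
  have hsqrt : b ≤ √(b ^ 2 + 4 * a * c) := (le_sqrt hb (by positivity)).2 (by nlinarith)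
  exact div_nonneg (by linarith) (by positivity)

theorem mu1_sq_ge_lower_bound_general
    (α μ₁ : ℝ) (hα : 0 < α) (hμ : μ₁ ∈ Set.Ioo 0 π)
    (heq : μ₁ * Real.tan (μ₁ / 2) = α) :
    μ₁^2 ≥ ((-α + Real.sqrt (α^2 + 8 * π^2 * α)) / (4 * π))^2 := by
  obtain ⟨h₀, hπ⟩ := hμ
  have hbound := mul_tan_half_mul_pi_sub_le h₀.le hπ
  rw [heq] at hbound
  have hquad : π * α ≤ 2 * π * μ₁ ^ 2 + α * μ₁ := by
    nlinarith [mul_nonneg pi_pos.le (sq_nonneg μ₁)]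
  have hdisc : α ^ 2 + 8 * π ^ 2 * α = α ^ 2 + 4 * (2 * π) * (π * α) := by ring
  rw [hdisc, show 4 * π = 2 * (2 * π) by ring]
  exact pow_le_pow_left₀ (quadratic_root_nonneg (by positivity) hα.le (by positivity))
    (quadratic_root_le (by positivity) hα.le h₀.le hquad) 2

theorem mu1_sq_ge_lower_bound
    (α μ₁ : ℝ) (hα : 0 < α) (hμ : μ₁ ∈ Set.Ioo 0 π)
    (heq : μ₁ * Real.tan (μ₁ / 2) = α)
    (huniq : ∀ μ ∈ Set.Ioo 0 π, μ * Real.tan (μ / 2) = α → μ = μ₁) :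
    μ₁^2 ≥ ((-α + Real.sqrt (α^2 + 8 * π^2 * α)) / (4 * π))^2 :=
  mu1_sq_ge_lower_bound_general α μ₁ hα hμ heq
end

section
/- If f : [0,1] → ℝ is C¹ with f(0) = f(1) = 0 and ∫₀¹ (f')² dz = π² ∫₀¹ f² dz with f not identically zero, then f(z) = c sin(πz) for some constant c. -/
/-!
Picone's identity: away from the zeros of `sin (π z)`, with `g = f / sin (π z)`,
  `f'² - π² f² = (sin (π z) · g')² + (π cot (π z) · f²)'`.
Since `f` and `sin (π z)` both vanish to first order at `0` and `1`, the boundary term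
`π cot (π z) · f²` tends to `0` there. Hence `Q x = ∫₀ˣ (f'² - π² f²) - π cot (π x) f(x)²` is
nondecreasing on `(0, 1)` with limit `0` at both ends, so `Q ≡ 0`, `g' ≡ 0` and `g` is constant.
-/

open Real intervalIntegral Set Filter Topology

theorem tendsto_sq_div_nhdsNE {𝕜 : Type*} [NontriviallyNormedField 𝕜] {f s : 𝕜 → 𝕜}
    {a f' s' : 𝕜} (hf : HasDerivAt f f' a) (hs : HasDerivAt s s' a) (hfa : f a = 0)
    (hsa : s a = 0) (hs' : s' ≠ 0) :
    Tendsto (fun x => f x ^ 2 / s x) (𝓝[≠] a) (𝓝 0) := by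
  have hfa' : Tendsto f (𝓝[≠] a) (𝓝 0) :=
    hfa ▸ hf.continuousAt.tendsto.mono_left nhdsWithin_le_nhds
  have hlim := ((hasDerivAt_iff_tendsto_slope.mp hf).mul hfa').mul
    ((hasDerivAt_iff_tendsto_slope.mp hs).inv₀ hs')
  rw [mul_zero, zero_mul] at hlim
  refine hlim.congr' (eventually_nhdsWithin_of_forall fun x hx => ?_)
  have hxa : x - a ≠ 0 := sub_ne_zero.mpr hx
  rcases eq_or_ne (s x) 0 with hsx | hsx
  · simp [hsx, slope_def_field, hsa]
  · simp only [slope_def_field, hfa, hsa, sub_zero]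
    field_simp

theorem hasDerivAt_sin_const_mul (ω x : ℝ) :
    HasDerivAt (fun y => sin (ω * y)) (cos (ω * x) * ω) x :=
  (hasDerivAt_const_mul ω).sin

theorem tendsto_cos_mul_sq_div_sin {f : ℝ → ℝ} {f' ω a : ℝ} (hf : HasDerivAt f f' a)
    (hfa : f a = 0) (hω : ω ≠ 0) (hsa : sin (ω * a) = 0) :
    Tendsto (fun x => ω * cos (ω * x) * (f x ^ 2 / sin (ω * x))) (𝓝[≠] a) (𝓝 0) := by
  have hca : cos (ω * a) ≠ 0 := by
    intro hca
    simpa [hsa, hca] using sin_sq_add_cos_sq (ω * a)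
  have hcos : Tendsto (fun x => ω * cos (ω * x)) (𝓝[≠] a) (𝓝 (ω * cos (ω * a))) :=
    (Continuous.tendsto (by fun_prop) a).mono_left nhdsWithin_le_nhds
  simpa using hcos.mul
    (tendsto_sq_div_nhdsNE hf (hasDerivAt_sin_const_mul ω a) hfa hsa (mul_ne_zero hca hω))

theorem hasDerivAt_cos_mul_sq_div_sin {f : ℝ → ℝ} {f' g' ω z : ℝ} (hf : HasDerivAt f f' z)
    (hg : HasDerivAt (fun x => f x / sin (ω * x)) g' z) (hz : sin (ω * z) ≠ 0) :
    HasDerivAt (fun x => ω * cos (ω * x) * (f x ^ 2 / sin (ω * x)))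
      (f' ^ 2 - ω ^ 2 * f z ^ 2 - (sin (ω * z) * g') ^ 2) z := by
  obtain rfl := hg.unique (hf.div (hasDerivAt_sin_const_mul ω z) hz)
  refine (((hasDerivAt_const_mul ω).cos.const_mul ω).mul
    ((hf.pow 2).div (hasDerivAt_sin_const_mul ω z) hz)).congr_deriv ?_
  simp only [Pi.div_apply, Pi.pow_apply]
  field_simp
  ring

theorem MonotoneOn.eqOn_Ioo_of_tendsto {Q : ℝ → ℝ} {a b L : ℝ} (hQ : MonotoneOn Q (Ioo a b))
    (ha : Tendsto Q (𝓝[>] a) (𝓝 L)) (hb : Tendsto Q (𝓝[<] b) (𝓝 L)) :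
    EqOn Q (fun _ => L) (Ioo a b) := by
  intro z hz
  apply le_antisymm
  · refine ge_of_tendsto hb ?_
    filter_upwards [Ioo_mem_nhdsLT hz.2] with x hx
    exact hQ hz ⟨hz.1.trans hx.1, hx.2⟩ hx.1.le
  · refine le_of_tendsto ha ?_
    filter_upwards [Ioo_mem_nhdsGT hz.1] with x hx
    exact hQ ⟨hx.1, hx.2.trans hz.2⟩ hz hx.2.le

theorem eqOn_zero_of_hasDerivAt_nonneg_of_tendsto {Q Q' : ℝ → ℝ} {a b L : ℝ}
    (hQ : ∀ z ∈ Ioo a b, HasDerivAt Q (Q' z) z) (hQ' : ∀ z ∈ Ioo a b, 0 ≤ Q' z)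
    (ha : Tendsto Q (𝓝[>] a) (𝓝 L)) (hb : Tendsto Q (𝓝[<] b) (𝓝 L)) :
    EqOn Q' 0 (Ioo a b) := by
  have hmono : MonotoneOn Q (Ioo a b) :=
    monotoneOn_of_deriv_nonneg (convex_Ioo a b)
      (fun z hz => (hQ z hz).continuousAt.continuousWithinAt)
      (fun z hz => (hQ z (interior_subset hz)).differentiableAt.differentiableWithinAt)
      (fun z hz => (hQ z (interior_subset hz)).deriv ▸ hQ' z (interior_subset hz))
  intro z hz
  have hconst : Q =ᶠ[𝓝 z] fun _ => L :=
    eventually_of_mem (isOpen_Ioo.mem_nhds hz) (hmono.eqOn_Ioo_of_tendsto ha hb)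
  exact (hQ z hz).unique ((hasDerivAt_const z L).congr_of_eventuallyEq hconst)

theorem sin_pi_mul_pos {z : ℝ} (hz : z ∈ Ioo (0 : ℝ) 1) : 0 < sin (π * z) :=
  sin_pos_of_pos_of_lt_pi (by nlinarith [pi_pos, hz.1]) (by nlinarith [pi_pos, hz.2])

theorem exists_eq_mul_sin_pi_of_deriv_div_eq_zero {f : ℝ → ℝ} (h0 : f 0 = 0) (h1 : f 1 = 0)
    (hg : DifferentiableOn ℝ (fun x => f x / sin (π * x)) (Ioo 0 1))
    (hg' : EqOn (deriv fun x => f x / sin (π * x)) 0 (Ioo 0 1)) :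
    ∃ c : ℝ, ∀ z ∈ Icc (0 : ℝ) 1, f z = c * sin (π * z) := by
  obtain ⟨c, hc⟩ := isOpen_Ioo.exists_is_const_of_deriv_eq_zero isPreconnected_Ioo hg hg'
  refine ⟨c, fun z hz => ?_⟩
  rcases hz.1.eq_or_lt with rfl | hz0
  · simp [h0]
  rcases hz.2.eq_or_lt with rfl | hz1
  · simp [h1]
  rw [← hc z ⟨hz0, hz1⟩, div_mul_cancel₀ _ (sin_pi_mul_pos ⟨hz0, hz1⟩).ne']

theorem poincare_equality_case_general
    (f : ℝ → ℝ) (hf : ContDiff ℝ 1 f)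
    (h0 : f 0 = 0) (h1 : f 1 = 0)
    (heq : (∫ z in (0:ℝ)..1, (deriv f z)^2) = π^2 * ∫ z in (0:ℝ)..1, (f z)^2) :
    ∃ c : ℝ, ∀ z ∈ Set.Icc (0:ℝ) 1, f z = c * Real.sin (π * z) := by
  have hf' (z : ℝ) : HasDerivAt f (deriv f z) z := (hf.differentiable one_ne_zero z).hasDerivAt
  set g := fun x => f x / sin (π * x)
  have hg (z) (hz : z ∈ Ioo (0 : ℝ) 1) : HasDerivAt g (deriv g z) z :=
    ((hf' z).differentiableAt.div (hasDerivAt_sin_const_mul π z).differentiableAt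
      (sin_pi_mul_pos hz).ne').hasDerivAt
  set F := fun x => ∫ t in (0:ℝ)..x, deriv f t ^ 2 - π ^ 2 * f t ^ 2
  have hF (z : ℝ) : HasDerivAt F (deriv f z ^ 2 - π ^ 2 * f z ^ 2) z :=
    (((hf.continuous_deriv le_rfl).pow 2).sub (continuous_const.mul (hf.continuous.pow 2))
      |>.integral_hasStrictDerivAt 0 z).hasDerivAt
  have hF0 : F 0 = 0 := integral_same
  have hF1 : F 1 = 0 := by
    simp only [F]
    rw [integral_sub, integral_const_mul, heq, sub_self] <;>
      apply Continuous.intervalIntegrable <;> fun_prop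
  set Q := fun x => F x - π * cos (π * x) * (f x ^ 2 / sin (π * x))
  have hQ (z) (hz : z ∈ Ioo (0 : ℝ) 1) : HasDerivAt Q ((sin (π * z) * deriv g z) ^ 2) z :=
    ((hF z).sub (hasDerivAt_cos_mul_sq_div_sin (hf' z)
      (hg z hz) (sin_pi_mul_pos hz).ne')).congr_deriv (by ring)
  have hQlim (a : ℝ) (ha : f a = 0) (hsa : sin (π * a) = 0) : Tendsto Q (𝓝[≠] a) (𝓝 (F a)) := by
    simpa using ((hF a).continuousAt.tendsto.mono_left nhdsWithin_le_nhds).sub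
      (tendsto_cos_mul_sq_div_sin (hf' a) ha pi_ne_zero hsa)
  have hQ' := eqOn_zero_of_hasDerivAt_nonneg_of_tendsto hQ (fun _ _ => sq_nonneg _)
    (hF0 ▸ (hQlim 0 h0 (by simp)).mono_left (nhdsGT_le_nhdsNE 0))
    (hF1 ▸ (hQlim 1 h1 (by simp)).mono_left (nhdsLT_le_nhdsNE 1))
  exact exists_eq_mul_sin_pi_of_deriv_div_eq_zero h0 h1
    (fun z hz => (hg z hz).differentiableAt.differentiableWithinAt)
    fun z hz => by simpa [(sin_pi_mul_pos hz).ne'] using hQ' hz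

theorem poincare_equality_case
    (f : ℝ → ℝ) (hf : ContDiff ℝ 1 f)
    (h0 : f 0 = 0) (h1 : f 1 = 0)
    (hne : ∃ z ∈ Set.Icc (0:ℝ) 1, f z ≠ 0)
    (heq : (∫ z in (0:ℝ)..1, (deriv f z)^2) = π^2 * ∫ z in (0:ℝ)..1, (f z)^2) :
    ∃ c : ℝ, ∀ z ∈ Set.Icc (0:ℝ) 1, f z = c * Real.sin (π * z) :=
  poincare_equality_case_general f hf h0 h1 heq
end
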